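/- Let d ≥ 1, let V ⊂ ℝ^d be a bounded measurable set of finite positive measure |V|, and let 1 ≤ q ≤ p ≤ ∞. There is a constant C(|V|) such that for every h ∈ L^q(ℝ^d) and every t ≠ 0, the v-independent function (x,v) ↦ h(x−tv) satisfies ‖h(x−tv)‖_{L^p(ℝ^d_x; L^q(V))} ≤ C(|V|) |t|^{−d(1/q − 1/p)} ‖h‖_{L^q(ℝ^d)}. -/

import Mathlib

open MeasureTheory Real Set ENNReal

noncomputable section

/-- `ℝ^d`. -/
abbrev Euc (d : ℕ) := EuclideanSpace ℝ (Fin d)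

/-- The mixed norm `‖h‖_{L^p_μ L^q_ν}`. -/
def mixedNorm {α β ε : Type*} [MeasurableSpace α] [MeasurableSpace β] [NormedAddCommGroup ε]
    (μ : Measure α) (ν : Measure β) (p q : ℝ≥0∞) (h : α → β → ε) : ℝ≥0∞ :=
  eLpNorm (fun x => (eLpNorm (h x) q ν).toReal) p μ

lemma map_aff (d : ℕ) (x : Euc d) {t : ℝ} (ht : t ≠ 0) :
    Measure.map (fun v : Euc d => x - t • v) volume
      = ENNReal.ofReal |(t ^ d)⁻¹| • volume := by
  have h1 : (fun v : Euc d => x - t • v) = (fun w : Euc d => x - w) ∘ (t • ·) := rfl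
  rw [h1, ← Measure.map_map (f := (t • ·)) (g := fun w : Euc d => x - w)
      (measurable_const.sub measurable_id) (measurable_const_smul t),
    Measure.map_addHaar_smul volume ht, Measure.map_smul, Measure.map_sub_left_eq_self volume x,
    finrank_euclideanSpace, Fintype.card_fin]

lemma boundA (d : ℕ) {t : ℝ} (ht : t ≠ 0) {h : Euc d → ℝ} (hm : Measurable h)
    (q : ℝ≥0∞) (V : Set (Euc d)) (x : Euc d) :
    eLpNorm (fun v => h (x - t • v)) q (volume.restrict V)
      ≤ ENNReal.ofReal |(t ^ d)⁻¹| ^ (1 / q).toReal * eLpNorm h q volume := by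
  have hc : ENNReal.ofReal |(t ^ d)⁻¹| ≠ 0 := by
    simp [ENNReal.ofReal_eq_zero, not_le, abs_pos, pow_ne_zero, ht]
  have hmap := eLpNorm_map_measure (f := fun v : Euc d => x - t • v) (g := h) (p := q)
      (μ := volume) (by rw [map_aff d x ht]; exact hm.aestronglyMeasurable)
      ((measurable_const.sub (measurable_const_smul t)).aemeasurable)
  calc eLpNorm (fun v => h (x - t • v)) q (volume.restrict V)
      ≤ eLpNorm (h ∘ fun v => x - t • v) q volume :=
        eLpNorm_mono_measure _ Measure.restrict_le_self
    _ = eLpNorm h q (Measure.map (fun v : Euc d => x - t • v) volume) := hmap.symm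
    _ = _ := by rw [map_aff d x ht, eLpNorm_smul_measure_of_ne_zero hc, smul_eq_mul]

lemma boundB (d : ℕ) (t : ℝ) {h : Euc d → ℝ} (hm : Measurable h)
    (q' : ℝ) (V : Set (Euc d)) :
    ∫⁻ x, ∫⁻ v in V, (‖h (x - t • v)‖₊ : ℝ≥0∞) ^ q'
      = volume V * ∫⁻ y, (‖h y‖₊ : ℝ≥0∞) ^ q' := by
  rw [lintegral_lintegral_swap]
  · have key : ∀ v : Euc d, ∫⁻ x, (‖h (x - t • v)‖₊ : ℝ≥0∞) ^ q'
        = ∫⁻ y, (‖h y‖₊ : ℝ≥0∞) ^ q' := fun v =>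
      (measurePreserving_sub_right volume (t • v)).lintegral_comp
        (hm.enorm.pow_const q')
    simp_rw [key]
    rw [setLIntegral_const, mul_comm]
  · exact ((hm.comp (measurable_fst.sub (measurable_snd.const_smul t))).enorm.pow_const
      q').aemeasurable

lemma c_pow (d : ℕ) {t : ℝ} (ht : t ≠ 0) (s : ℝ) :
    ENNReal.ofReal |(t ^ d)⁻¹| ^ s = ENNReal.ofReal (|t| ^ (-(d : ℝ) * s)) := by
  have h1 : |(t ^ d)⁻¹| = |t| ^ (-(d : ℝ)) := by
    rw [abs_inv, abs_pow, ← Real.rpow_natCast |t| d, ← Real.rpow_neg (abs_nonneg t)]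
  rw [h1, ENNReal.ofReal_rpow_of_pos (Real.rpow_pos_of_pos (abs_pos.2 ht) _),
    ← Real.rpow_mul (abs_nonneg t)]

lemma core_top (d : ℕ) (V : Set (Euc d)) (q : ℝ≥0∞)
    {h : Euc d → ℝ} (hm : Measurable h) (hN : eLpNorm h q volume ≠ ⊤)
    {t : ℝ} (ht : t ≠ 0) :
    mixedNorm volume (volume.restrict V) ⊤ q (fun x _v => h (x - t • _v))
      ≤ ENNReal.ofReal |(t ^ d)⁻¹| ^ (1 / q).toReal * eLpNorm h q volume := by
  set c := ENNReal.ofReal |(t ^ d)⁻¹| with hc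
  set N := eLpNorm h q volume with hNdef
  set A := c ^ (1 / q).toReal * N with hA
  have hA_top : A ≠ ⊤ :=
    ENNReal.mul_ne_top (ENNReal.rpow_ne_top_of_nonneg ENNReal.toReal_nonneg
      ENNReal.ofReal_ne_top) hN
  have hbd : ∀ x : Euc d,
      ‖(eLpNorm (fun v => h (x - t • v)) q (volume.restrict V)).toReal‖ ≤ A.toReal := by
    intro x
    rw [Real.norm_of_nonneg ENNReal.toReal_nonneg]
    exact ENNReal.toReal_mono hA_top (boundA d ht hm q V x)
  calc mixedNorm volume (volume.restrict V) ⊤ q (fun x _v => h (x - t • _v))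
      = eLpNormEssSup
        (fun x => (eLpNorm (fun v => h (x - t • v)) q (volume.restrict V)).toReal) volume := by
        rw [mixedNorm, eLpNorm_exponent_top]
    _ ≤ ENNReal.ofReal A.toReal :=
        eLpNormEssSup_le_of_ae_bound (Filter.Eventually.of_forall hbd)
    _ = A := ENNReal.ofReal_toReal hA_top

lemma core_fin (d : ℕ) (V : Set (Euc d)) {p q : ℝ≥0∞} (hq : 1 ≤ q) (hqp : q ≤ p)
    (hp_top : p ≠ ⊤) {h : Euc d → ℝ} (hm : Measurable h) (hN : eLpNorm h q volume ≠ ⊤)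
    {t : ℝ} (ht : t ≠ 0) :
    mixedNorm volume (volume.restrict V) p q (fun x _v => h (x - t • _v))
      ≤ volume V ^ (1 / p.toReal) *
        ENNReal.ofReal |(t ^ d)⁻¹| ^ (1 / q.toReal - 1 / p.toReal) * eLpNorm h q volume := by
  set c := ENNReal.ofReal |(t ^ d)⁻¹| with hc
  set N := eLpNorm h q volume with hNdef
  set W := volume V with hW
  have hq0 : q ≠ 0 := (lt_of_lt_of_le zero_lt_one hq).ne'
  have hq_top : q ≠ ⊤ := (lt_of_le_of_lt hqp hp_top.lt_top).ne
  have hp0 : p ≠ 0 := (lt_of_lt_of_le (lt_of_lt_of_le zero_lt_one hq) hqp).ne'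
  set q' := q.toReal with hq'
  set p' := p.toReal with hp'
  have hq'pos : 0 < q' := ENNReal.toReal_pos hq0 hq_top
  have hp'pos : 0 < p' := ENNReal.toReal_pos hp0 hp_top
  have hq'p' : q' ≤ p' := ENNReal.toReal_mono hp_top hqp
  have hs₁ : (1 / q).toReal = q'⁻¹ := by rw [one_div, ENNReal.toReal_inv]
  set A := c ^ q'⁻¹ * N with hA
  have hc_top : c ≠ ⊤ := ENNReal.ofReal_ne_top
  have hA_top : A ≠ ⊤ :=
    ENNReal.mul_ne_top (ENNReal.rpow_ne_top_of_nonneg (by positivity) hc_top) hN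
  set inn : Euc d → ℝ≥0∞ := fun x => eLpNorm (fun v => h (x - t • v)) q (volume.restrict V)
    with hinn
  have hinn_le : ∀ x, inn x ≤ A := by
    intro x
    have := boundA d ht hm q V x
    rwa [hs₁] at this
  have hcoe : ∀ x, (‖(inn x).toReal‖₊ : ℝ≥0∞) = inn x := by
    intro x
    rw [← enorm_eq_nnnorm, Real.enorm_eq_ofReal ENNReal.toReal_nonneg,
      ENNReal.ofReal_toReal (lt_of_le_of_lt (hinn_le x) hA_top.lt_top).ne]
  have hin_pow : ∀ x, inn x ^ q' = ∫⁻ v in V, (‖h (x - t • v)‖₊ : ℝ≥0∞) ^ q' := by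
    intro x
    simp only [hinn]
    rw [eLpNorm_eq_lintegral_rpow_enorm_toReal hq0 hq_top, one_div,
      ENNReal.rpow_inv_rpow hq'pos.ne']; rfl
  have hNpow : N ^ q' = ∫⁻ y, (‖h y‖₊ : ℝ≥0∞) ^ q' := by
    rw [hNdef, eLpNorm_eq_lintegral_rpow_enorm_toReal hq0 hq_top, one_div,
      ENNReal.rpow_inv_rpow hq'pos.ne']; rfl
  have step1 : mixedNorm volume (volume.restrict V) p q (fun x _v => h (x - t • _v))
      = (∫⁻ x, inn x ^ p') ^ (1 / p') := by
    rw [mixedNorm, eLpNorm_eq_lintegral_rpow_enorm_toReal hp0 hp_top]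
    congr 1
    refine lintegral_congr fun x => ?_
    exact congrArg (· ^ p') (hcoe x)
  have step2 : (∫⁻ x, inn x ^ p') ≤ A ^ (p' - q') * (W * N ^ q') := by
    calc (∫⁻ x, inn x ^ p') ≤ ∫⁻ x, A ^ (p' - q') * inn x ^ q' := by
          refine lintegral_mono fun x => ?_
          calc inn x ^ p' = inn x ^ (p' - q') * inn x ^ q' := by
                rw [← ENNReal.rpow_add_of_nonneg _ _ (sub_nonneg.2 hq'p') hq'pos.le,
                  sub_add_cancel]
            _ ≤ A ^ (p' - q') * inn x ^ q' :=
                mul_le_mul_left (ENNReal.rpow_le_rpow (hinn_le x) (sub_nonneg.2 hq'p')) _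
      _ = A ^ (p' - q') * ∫⁻ x, inn x ^ q' :=
          lintegral_const_mul' _ _
            (ENNReal.rpow_ne_top_of_nonneg (sub_nonneg.2 hq'p') hA_top)
      _ = A ^ (p' - q') * (W * N ^ q') := by
          congr 1
          simp_rw [hin_pow]
          rw [boundB d t hm q' V, hNpow]
  have halg : (A ^ (p' - q') * (W * N ^ q')) ^ (1 / p')
      = W ^ (1 / p') * c ^ (1 / q' - 1 / p') * N := by
    have e1 : A ^ (p' - q') = c ^ (q'⁻¹ * (p' - q')) * N ^ (p' - q') := by
      rw [hA, ENNReal.mul_rpow_of_nonneg _ _ (sub_nonneg.2 hq'p'), ← ENNReal.rpow_mul]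
    have e2 : A ^ (p' - q') * (W * N ^ q') = c ^ (q'⁻¹ * (p' - q')) * W * N ^ p' := by
      have eN2 : N ^ p' = N ^ (p' - q') * N ^ q' := by
        rw [← ENNReal.rpow_add_of_nonneg _ _ (sub_nonneg.2 hq'p') hq'pos.le, sub_add_cancel]
      rw [e1, eN2]; ring
    rw [e2, ENNReal.mul_rpow_of_nonneg _ _ (by positivity : (0:ℝ) ≤ 1 / p'),
      ENNReal.mul_rpow_of_nonneg _ _ (by positivity : (0:ℝ) ≤ 1 / p'),
      ← ENNReal.rpow_mul c, ← ENNReal.rpow_mul N]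
    have eexp : q'⁻¹ * (p' - q') * (1 / p') = 1 / q' - 1 / p' := by
      field_simp
    have eN : p' * (1 / p') = 1 := by field_simp
    rw [eexp, eN, ENNReal.rpow_one, mul_comm (c ^ _) _, mul_assoc, mul_comm (c ^ _) N,
      ← mul_assoc]
  calc mixedNorm volume (volume.restrict V) p q (fun x _v => h (x - t • _v))
      = (∫⁻ x, inn x ^ p') ^ (1 / p') := step1
    _ ≤ (A ^ (p' - q') * (W * N ^ q')) ^ (1 / p') :=
        ENNReal.rpow_le_rpow step2 (by positivity)
    _ = W ^ (1 / p') * c ^ (1 / q' - 1 / p') * N := halg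

/-- Let `d ≥ 1`, let `V ⊂ ℝ^d` be a bounded measurable set of finite
positive measure, and let `1 ≤ q ≤ p ≤ ∞`.  There is a constant `C(|V|)` such that for
every `h ∈ L^q(ℝ^d)` and every `t ≠ 0`, the `v`-independent function `(x,v) ↦ h(x−tv)`
satisfies
`‖h(x−tv)‖_{L^p(ℝ^d_x; L^q(V))} ≤ C(|V|) |t|^{−d(1/q − 1/p)} ‖h‖_{L^q(ℝ^d)}`. -/
theorem dispersion_estimate_v_independent (d : ℕ) (hd : 1 ≤ d)
    (V : Set (Euc d)) (hVmeas : MeasurableSet V) (hVbdd : Bornology.IsBounded V)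
    (hVpos : 0 < volume V) (hVfin : volume V < ⊤)
    (p q : ℝ≥0∞) (hq : 1 ≤ q) (hqp : q ≤ p) :
    ∃ C : ℝ≥0∞, C < ⊤ ∧
      ∀ h : Euc d → ℝ, MemLp h q volume → ∀ t : ℝ, t ≠ 0 →
        mixedNorm volume (volume.restrict V) p q (fun x _v => h (x - t • _v))
          ≤ C * ENNReal.ofReal (|t| ^ (-(d : ℝ) * (q⁻¹ - p⁻¹).toReal))
            * eLpNorm h q volume := by
  refine ⟨if p = ⊤ then 1 else volume V ^ (1 / p.toReal), ?_, ?_⟩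
  · split
    · exact one_lt_top
    · exact ENNReal.rpow_lt_top_of_nonneg (by positivity) hVfin.ne
  intro h hmem t ht
  obtain ⟨h', hm', hh'⟩ : ∃ h', Measurable h' ∧ h =ᵐ[volume] h' :=
    ⟨hmem.aestronglyMeasurable.mk h,
      hmem.aestronglyMeasurable.stronglyMeasurable_mk.measurable,
      hmem.aestronglyMeasurable.ae_eq_mk⟩
  have hN : eLpNorm h q volume = eLpNorm h' q volume := eLpNorm_congr_ae hh'
  have hN'_top : eLpNorm h' q volume ≠ ⊤ := by rw [← hN]; exact hmem.2.ne
  have hMix : mixedNorm volume (volume.restrict V) p q (fun x _v => h (x - t • _v))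
      = mixedNorm volume (volume.restrict V) p q (fun x _v => h' (x - t • _v)) := by
    rw [mixedNorm, mixedNorm]
    refine eLpNorm_congr_ae (Filter.Eventually.of_forall fun x => ?_)
    have hqmp : Measure.QuasiMeasurePreserving (fun v : Euc d => x - t • v) volume volume :=
      ⟨measurable_const.sub (measurable_const_smul t),
        by rw [map_aff d x ht]; exact Measure.smul_absolutelyContinuous⟩
    have heq : (fun v => h (x - t • v)) =ᵐ[volume.restrict V] (fun v => h' (x - t • v)) :=
      (hqmp.ae_eq_comp hh').filter_mono (ae_mono Measure.restrict_le_self)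
    exact congrArg ENNReal.toReal (eLpNorm_congr_ae heq)
  rw [hMix, hN]
  by_cases hp_top : p = ⊤
  · subst hp_top
    rw [if_pos rfl, one_mul]
    have hexp : (q⁻¹ - (⊤ : ℝ≥0∞)⁻¹).toReal = (1 / q).toReal := by
      simp [ENNReal.inv_top, one_div]
    rw [hexp, ← c_pow d ht]
    exact core_top d V q hm' hN'_top ht
  · simp only [if_neg hp_top]
    have hq0 : q ≠ 0 := (lt_of_lt_of_le zero_lt_one hq).ne'
    have hexp : (q⁻¹ - p⁻¹).toReal = 1 / q.toReal - 1 / p.toReal := by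
      rw [ENNReal.toReal_sub_of_le (ENNReal.inv_le_inv.2 hqp) (by simp [hq0]),
        ENNReal.toReal_inv, ENNReal.toReal_inv, one_div, one_div]
    rw [hexp, ← c_pow d ht]
    exact core_fin d V hq hqp hp_top hm' hN'_top ht
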